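/- Let f : 2^V → ℝ≥0 be monotone. (i) If f is α-weakly DR-submodular for some α ∈ (0,1], then for every feasible subset S ⊆ V and every point x = (p_1,…,p_K) ∈ ∏_{k=1}^K Δ_{n_k}: ⟨ Σ_{k=1}^K (1/B_k)·1_{S∩V_k} − x, ∇F(x) ⟩ ≥ α·f(S) − (α + 1/α)·F(x). (ii) If f is (γ,β)-weakly submodular for some γ ∈ (0,1] and β ≥ 1, then for every feasible subset S ⊆ V and every x ∈ ∏_{k=1}^K Δ_{n_k}: ⟨ Σ_{k=1}^K (1/B_k)·1_{S∩V_k} − x, ∇F(x) ⟩ ≥ γ²·f(S) − (β + β(1−γ) + γ²)·F(x). -/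

import Mathlib

open Finset

noncomputable section

namespace Multinoulli

variable {K : ℕ}

/-- An element of the ground set `V`: a community index `k` together with the
index `m` of the element `v_k^m` inside its community `V_k`. -/
abbrev Elem (n : Fin K → ℕ) := Σ k : Fin K, Fin (n k)

/-- A sampling slot: a community `k` together with a trial index `b ∈ {1,…,B_k}`. -/
abbrev Slot (B : Fin K → ℕ) := Σ k : Fin K, Fin (B k)

/-- A joint outcome of all the independent multinoulli trials; `none` encodes a
draw of `∅`, which contributes no element. -/
abbrev Choice (n B : Fin K → ℕ) := ∀ s : Slot B, Option (Fin (n s.1))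

/-- The probability that `Multi(p_k)` (the `k`-th block of `x`) assigns to a given
outcome: `x ⟨k,m⟩` for the element `v_k^m` and `1 - Σ_m x ⟨k,m⟩` for `∅`. -/
def prob (n : Fin K → ℕ) (x : Elem n → ℝ) (k : Fin K) : Option (Fin (n k)) → ℝ
  | some m => x ⟨k, m⟩
  | none => 1 - ∑ m : Fin (n k), x ⟨k, m⟩

/-- The probability of the joint outcome `e` (all trials are mutually independent). -/
def jointProb (n B : Fin K → ℕ) (x : Elem n → ℝ) (e : Choice n B) : ℝ :=
  ∏ s : Slot B, prob n x s.1 (e s)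

/-- The subset of the ground set selected by the trials whose slot lies in `A`
(a draw of `∅` contributes no element to the union). -/
def chosen (n B : Fin K → ℕ) (e : Choice n B) (A : Finset (Slot B)) : Finset (Elem n) :=
  A.biUnion fun s => ((e s).map fun m => (⟨s.1, m⟩ : Elem n)).toFinset

/-- The Multinoulli Extension `F` of the set function `f`:
`F(x) = E[f(∪_{k,b} {e_k^b})]` for mutually independent `e_k^b ∼ Multi(p_k)`. -/
def ME (n B : Fin K → ℕ) (f : Finset (Elem n) → ℝ) (x : Elem n → ℝ) : ℝ :=
  ∑ e : Choice n B, f (chosen n B e Finset.univ) * jointProb n B x e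

/-- The first-order partial derivative `∂G/∂x_i` at `x`. -/
def pderiv (n : Fin K → ℕ) (G : (Elem n → ℝ) → ℝ) (i : Elem n) (x : Elem n → ℝ) : ℝ :=
  deriv (fun t => G (Function.update x i t)) (x i)

/-- The gradient `∇G(x)`. -/
def grad (n : Fin K → ℕ) (G : (Elem n → ℝ) → ℝ) (x : Elem n → ℝ) : Elem n → ℝ :=
  fun i => pderiv n G i x

/-- The second-order partial derivative `∂²G/∂x_i∂x_j` at `x`. -/
def pderiv2 (n : Fin K → ℕ) (G : (Elem n → ℝ) → ℝ) (i j : Elem n) (x : Elem n → ℝ) : ℝ :=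
  pderiv n (fun y => pderiv n G j y) i x

/-- The Euclidean inner product on `∏_k ℝ^{n_k}`. -/
def inner' (n : Fin K → ℕ) (u v : Elem n → ℝ) : ℝ := ∑ i : Elem n, u i * v i

/-- Membership in the product of simplices `∏_{k=1}^K Δ_{n_k}`. -/
def InSimplex (n : Fin K → ℕ) (x : Elem n → ℝ) : Prop :=
  (∀ i, 0 ≤ x i) ∧ ∀ k : Fin K, ∑ m : Fin (n k), x ⟨k, m⟩ ≤ 1

/-- Feasibility for the partition constraint: `|S ∩ V_k| ≤ B_k` for all `k`. -/
def Feasible (n B : Fin K → ℕ) (S : Finset (Elem n)) : Prop :=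
  ∀ k : Fin K, (S.filter fun i => i.1 = k).card ≤ B k

/-- Monotonicity of a set function. -/
def MonotoneSet (n : Fin K → ℕ) (f : Finset (Elem n) → ℝ) : Prop :=
  ∀ A B : Finset (Elem n), A ⊆ B → f A ≤ f B

/-- The marginal contribution `f(v|A) = f(A ∪ {v}) - f(A)`. -/
def marg (n : Fin K → ℕ) (f : Finset (Elem n) → ℝ) (v : Elem n) (A : Finset (Elem n)) : ℝ :=
  f (insert v A) - f A

/-- `α`-weak DR-submodularity: `f(v|A) ≥ α·f(v|B)` for all `A ⊆ B` and `v ∉ B`. -/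
def WeaklyDR (n : Fin K → ℕ) (f : Finset (Elem n) → ℝ) (α : ℝ) : Prop :=
  ∀ A B : Finset (Elem n), A ⊆ B → ∀ v, v ∉ B → α * marg n f v B ≤ marg n f v A

/-- `γ`-weak submodularity from below. -/
def WeaklyBelow (n : Fin K → ℕ) (f : Finset (Elem n) → ℝ) (γ : ℝ) : Prop :=
  ∀ A B : Finset (Elem n), A ⊆ B → γ * (f B - f A) ≤ ∑ v ∈ B \ A, marg n f v A

/-- `β`-weak submodularity from above. -/
def WeaklyAbove (n : Fin K → ℕ) (f : Finset (Elem n) → ℝ) (β : ℝ) : Prop :=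
  ∀ A B : Finset (Elem n), A ⊆ B → ∑ v ∈ B \ A, marg n f v (B.erase v) ≤ β * (f B - f A)

/-- The scaled indicator vector `Σ_{k=1}^K (1/B_k)·1_{S∩V_k}`. -/
def indVec (n B : Fin K → ℕ) (S : Finset (Elem n)) : Elem n → ℝ :=
  fun i => if i ∈ S then ((B i.1 : ℝ))⁻¹ else 0

/-! Write `R` for the drawn set and `R_s` for the set drawn when the trial in slot `s` is replaced
by `∅`. Differentiating the product of the trial probabilities gives
`∂F/∂x_{k,m} = Σ_b E[f(v_k^m | R_{(k,b)})]`, hence `⟨Σ_k 1_{S∩V_k}/B_k, ∇F(x)⟩` is the expected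
average gain of the elements of `S` over the sets `R_s`, `⟨x, ∇F(x)⟩ = E[Σ_s (f(R) - f(R_s))]`,
and both inequalities can be proved outcome by outcome. An element of `R` is missed by at most one
`R_s`, so the loss `Σ_s (f(R) - f(R_s))` is at most `Σ_{v ∈ R} f(v | R - v) ≤ β f(R)` (with
`β = α⁻¹` in the DR case). Each gain `f(v | R_s)` is at least `α f(v | R')` for every `R' ⊇ R` in
the DR case, and at least `γ f(v | R) - (1 - γ)(f(R) - f(R_s))` in general since `R \ R_s` has at
most one element; by feasibility each slot's loss is charged to at most `B_k` elements of `S`,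
which cancels the weight `1/B_k`.
-/

section Outcomes

variable {n B : Fin K → ℕ}

def outcomeSet (n : Fin K → ℕ) (k : Fin K) (o : Option (Fin (n k))) : Finset (Elem n) :=
  (o.map fun m => (⟨k, m⟩ : Elem n)).toFinset

def chosenExcept (n B : Fin K → ℕ) (e : Choice n B) (s : Slot B) : Finset (Elem n) :=
  chosen n B (Function.update e s none) univ

lemma mem_chosen {e : Choice n B} {A : Finset (Slot B)} {v : Elem n} :
    v ∈ chosen n B e A ↔ ∃ s ∈ A, v ∈ outcomeSet n s.1 (e s) := by
  simp [chosen, outcomeSet]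

lemma card_outcomeSet_le_one (k : Fin K) (o : Option (Fin (n k))) :
    (outcomeSet n k o).card ≤ 1 := by
  cases o <;> simp [outcomeSet]

lemma chosen_update (e : Choice n B) (s : Slot B) (o : Option (Fin (n s.1))) :
    chosen n B (Function.update e s o) univ = outcomeSet n s.1 o ∪ chosenExcept n B e s := by
  ext v
  simp only [chosenExcept, mem_chosen, mem_union, mem_univ, true_and]
  constructor
  · rintro ⟨t, ht⟩
    by_cases hts : t = s
    · subst hts; simp_all
    · exact Or.inr ⟨t, by simpa [Function.update_of_ne hts] using ht⟩
  · rintro (h | ⟨t, ht⟩)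
    · exact ⟨s, by simpa using h⟩
    · by_cases hts : t = s
      · subst hts; simp [outcomeSet] at ht
      · exact ⟨t, by simpa [Function.update_of_ne hts] using ht⟩

lemma chosen_eq_union (e : Choice n B) (s : Slot B) :
    chosen n B e univ = outcomeSet n s.1 (e s) ∪ chosenExcept n B e s := by
  simpa using chosen_update e s (e s)

lemma chosenExcept_subset (e : Choice n B) (s : Slot B) :
    chosenExcept n B e s ⊆ chosen n B e univ := by
  rw [chosen_eq_union e s]
  exact subset_union_right

lemma card_sdiff_chosenExcept_le_one (e : Choice n B) (s : Slot B) :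
    (chosen n B e univ \ chosenExcept n B e s).card ≤ 1 := by
  rw [chosen_eq_union e s, union_sdiff_right]
  exact (card_le_card sdiff_subset).trans (card_outcomeSet_le_one _ _)

lemma mem_chosenExcept_of_ne {e : Choice n B} {s t : Slot B} {v : Elem n}
    (hv : v ∈ outcomeSet n t.1 (e t)) (hts : t ≠ s) : v ∈ chosenExcept n B e s :=
  mem_chosen.2 ⟨t, mem_univ _, by rwa [Function.update_of_ne hts]⟩

lemma card_filter_notMem_chosenExcept_le_one {e : Choice n B} {v : Elem n}
    (hv : v ∈ chosen n B e univ) :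
    (univ.filter fun s => v ∉ chosenExcept n B e s).card ≤ 1 := by
  refine card_le_one.2 fun s hs t ht => ?_
  by_contra hst
  have hvs : v ∈ outcomeSet n s.1 (e s) := by
    rw [chosen_eq_union e s] at hv
    exact (mem_union.1 hv).resolve_right (mem_filter.1 hs).2
  exact (mem_filter.1 ht).2 (mem_chosenExcept_of_ne hvs hst)

end Outcomes

section Expectation

variable {n B : Fin K → ℕ}

def probExcept (n B : Fin K → ℕ) (x : Elem n → ℝ) (s : Slot B) (e : Choice n B) : ℝ :=
  ∏ t ∈ univ.erase s, prob n x t.1 (e t)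

def forcedME (n B : Fin K → ℕ) (f : Finset (Elem n) → ℝ) (x : Elem n → ℝ) (s : Slot B)
    (o : Option (Fin (n s.1))) : ℝ :=
  ∑ e : Choice n B, f (chosen n B (Function.update e s o) univ) * jointProb n B x e

lemma sum_prob (x : Elem n → ℝ) (k : Fin K) : ∑ o, prob n x k o = 1 := by
  simp [Fintype.sum_option, prob]

lemma prob_nonneg {x : Elem n → ℝ} (hx : InSimplex n x) (k : Fin K) (o : Option (Fin (n k))) :
    0 ≤ prob n x k o := by
  cases o with
  | none => simpa [prob] using hx.2 k
  | some m => exact hx.1 _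

lemma jointProb_nonneg {x : Elem n → ℝ} (hx : InSimplex n x) (e : Choice n B) :
    0 ≤ jointProb n B x e :=
  prod_nonneg fun _ _ => prob_nonneg hx _ _

lemma sum_jointProb (x : Elem n → ℝ) : ∑ e : Choice n B, jointProb n B x e = 1 := by
  simp_rw [jointProb, ← Fintype.prod_sum fun (s : Slot B) o => prob n x s.1 o, sum_prob,
    prod_const_one]

lemma jointProb_eq_mul_probExcept (x : Elem n → ℝ) (s : Slot B) (e : Choice n B) :
    jointProb n B x e = prob n x s.1 (e s) * probExcept n B x s e :=
  (mul_prod_erase univ (fun t : Slot B => prob n x t.1 (e t)) (mem_univ s)).symm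

lemma probExcept_update (x : Elem n → ℝ) (s : Slot B) (e : Choice n B)
    (o : Option (Fin (n s.1))) :
    probExcept n B x s (Function.update e s o) = probExcept n B x s e :=
  prod_congr rfl fun _ ht => by rw [Function.update_of_ne (ne_of_mem_erase ht)]

/-- Only the slots other than `s` are random once `e s = o` is fixed, and the law of
`e s` has total mass one. -/
lemma sum_filter_mul_probExcept (x : Elem n → ℝ) (s : Slot B) (o : Option (Fin (n s.1)))
    (φ : Choice n B → ℝ) :
    ∑ e with e s = o, φ e * probExcept n B x s e
      = ∑ e, φ (Function.update e s o) * jointProb n B x e := by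
  have hfiber : ∀ o', ∑ e with e s = o', φ (Function.update e s o) * probExcept n B x s e
      = ∑ e with e s = o, φ e * probExcept n B x s e := fun o' =>
    sum_nbij' (fun e => Function.update e s o) (fun e => Function.update e s o')
      (by simp) (by simp)
      (fun e he => by simp [← (mem_filter.1 he).2])
      (fun e he => by simp [← (mem_filter.1 he).2])
      (fun e _ => by rw [probExcept_update])
  calc ∑ e with e s = o, φ e * probExcept n B x s e
      = ∑ o', prob n x s.1 o' *
          ∑ e with e s = o', φ (Function.update e s o) * probExcept n B x s e := by
        simp_rw [hfiber, ← sum_mul, sum_prob, one_mul]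
    _ = ∑ e, φ (Function.update e s o) * jointProb n B x e := by
        rw [← sum_fiberwise univ (fun e : Choice n B => e s)]
        refine sum_congr rfl fun o' _ => ?_
        rw [mul_sum]
        refine sum_congr rfl fun e he => ?_
        rw [jointProb_eq_mul_probExcept x s, (mem_filter.1 he).2]
        ring

lemma ME_eq_sum_prob_mul_forcedME (f : Finset (Elem n) → ℝ) (x : Elem n → ℝ) (s : Slot B) :
    ME n B f x = ∑ o, prob n x s.1 o * forcedME n B f x s o := by
  rw [ME, ← sum_fiberwise univ (fun e : Choice n B => e s)]
  refine sum_congr rfl fun o _ => ?_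
  rw [forcedME, ← sum_filter_mul_probExcept x s o (fun e => f (chosen n B e univ)), mul_sum]
  refine sum_congr rfl fun e he => ?_
  rw [jointProb_eq_mul_probExcept x s, (mem_filter.1 he).2]
  ring

lemma forcedME_some_sub_none (f : Finset (Elem n) → ℝ) (x : Elem n → ℝ) (s : Slot B)
    (m : Fin (n s.1)) :
    forcedME n B f x s (some m) - forcedME n B f x s none
      = ∑ e, marg n f ⟨s.1, m⟩ (chosenExcept n B e s) * jointProb n B x e := by
  rw [forcedME, forcedME, ← sum_sub_distrib]
  refine sum_congr rfl fun e _ => ?_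
  rw [chosen_update, chosen_update, marg, ← sub_mul]
  simp only [outcomeSet, Option.map_some, Option.map_none, Option.toFinset_some,
    Option.toFinset_none, empty_union, ← insert_eq]

end Expectation

section Derivative

variable {n B : Fin K → ℕ}

def probDeriv (n : Fin K → ℕ) (i : Elem n) (k : Fin K) : Option (Fin (n k)) → ℝ
  | some m => if (⟨k, m⟩ : Elem n) = i then 1 else 0
  | none => if k = i.1 then -1 else 0

lemma hasDerivAt_update_apply (x : Elem n → ℝ) (i j : Elem n) (t : ℝ) :
    HasDerivAt (fun t => Function.update x i t j) (if j = i then 1 else 0) t := by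
  by_cases h : j = i
  · subst h
    simpa using hasDerivAt_id' t
  · simpa [Function.update_of_ne h, h] using hasDerivAt_const t (x j)

lemma hasDerivAt_prob_update (x : Elem n → ℝ) (i : Elem n) (k : Fin K)
    (o : Option (Fin (n k))) (t : ℝ) :
    HasDerivAt (fun t => prob n (Function.update x i t) k o) (probDeriv n i k o) t := by
  cases o with
  | some m => simpa [prob, probDeriv] using hasDerivAt_update_apply x i ⟨k, m⟩ t
  | none =>
    have hsum : (∑ m : Fin (n k), if (⟨k, m⟩ : Elem n) = i then (1 : ℝ) else 0)
        = if k = i.1 then 1 else 0 := by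
      obtain ⟨k₀, m₀⟩ := i
      by_cases hk : k = k₀
      · subst hk; simp
      · simp [hk]
    have h := (HasDerivAt.fun_sum fun m (_ : m ∈ univ) =>
      hasDerivAt_update_apply x i ⟨k, m⟩ t).const_sub 1
    rw [hsum] at h
    by_cases hk : k = i.1 <;> simpa [prob, probDeriv, hk] using h

lemma hasDerivAt_jointProb_update (x : Elem n → ℝ) (i : Elem n) (e : Choice n B) :
    HasDerivAt (fun t => jointProb n B (Function.update x i t) e)
      (∑ s, probDeriv n i s.1 (e s) * probExcept n B x s e) (x i) := by
  have h := HasDerivAt.fun_finsetProd (u := univ)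
    (fun s (_ : s ∈ univ) => hasDerivAt_prob_update x i s.1 (e s) (x i))
  simpa [jointProb, probExcept, Function.update_eq_self, smul_eq_mul, mul_comm] using h

lemma pderiv_ME_eq_sum_probDeriv_mul (f : Finset (Elem n) → ℝ) (x : Elem n → ℝ)
    (i : Elem n) :
    pderiv n (ME n B f) i x = ∑ s, ∑ o, probDeriv n i s.1 o * forcedME n B f x s o := by
  have h := HasDerivAt.fun_sum fun e (_ : e ∈ univ) =>
    (hasDerivAt_jointProb_update x i e).const_mul (f (chosen n B e univ))
  simp only [pderiv, ME]
  rw [h.deriv]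
  simp_rw [mul_sum]
  rw [sum_comm]
  refine sum_congr rfl fun s _ => ?_
  rw [← sum_fiberwise univ (fun e : Choice n B => e s)]
  refine sum_congr rfl fun o _ => ?_
  rw [forcedME, ← sum_filter_mul_probExcept x s o (fun e => f (chosen n B e univ)), mul_sum]
  refine sum_congr rfl fun e he => ?_
  rw [(mem_filter.1 he).2]
  ring

lemma pderiv_ME (f : Finset (Elem n) → ℝ) (x : Elem n → ℝ) (i : Elem n) :
    pderiv n (ME n B f) i x = ∑ b : Fin (B i.1),
      (forcedME n B f x ⟨i.1, b⟩ (some i.2) - forcedME n B f x ⟨i.1, b⟩ none) := by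
  obtain ⟨k₀, m₀⟩ := i
  rw [pderiv_ME_eq_sum_probDeriv_mul, ← univ_sigma_univ, sum_sigma, sum_eq_single k₀]
  · refine sum_congr rfl fun b _ => ?_
    simp [Fintype.sum_option, probDeriv, sub_eq_neg_add]
  · intro k _ hk
    refine sum_eq_zero fun b _ => sum_eq_zero fun o _ => ?_
    cases o <;> simp [probDeriv, hk]
  · simp

end Derivative

section Gradient

variable {n B : Fin K → ℕ}

def avgMarg (n B : Fin K → ℕ) (f : Finset (Elem n) → ℝ) (i : Elem n) (e : Choice n B) : ℝ :=
  (B i.1 : ℝ)⁻¹ * ∑ b : Fin (B i.1), marg n f i (chosenExcept n B e ⟨i.1, b⟩)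

def dropLoss (n B : Fin K → ℕ) (f : Finset (Elem n) → ℝ) (e : Choice n B) : ℝ :=
  ∑ s, (f (chosen n B e univ) - f (chosenExcept n B e s))

lemma ME_sub_forcedME_none (f : Finset (Elem n) → ℝ) (x : Elem n → ℝ) (s : Slot B) :
    ME n B f x - forcedME n B f x s none
      = ∑ e, (f (chosen n B e univ) - f (chosenExcept n B e s)) * jointProb n B x e := by
  simp only [ME, forcedME, chosenExcept, sub_mul, sum_sub_distrib]

lemma sum_mul_forcedME_sub (f : Finset (Elem n) → ℝ) (x : Elem n → ℝ) (s : Slot B) :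
    ∑ m, x ⟨s.1, m⟩ * (forcedME n B f x s (some m) - forcedME n B f x s none)
      = ME n B f x - forcedME n B f x s none := by
  rw [ME_eq_sum_prob_mul_forcedME f x s, Fintype.sum_option]
  simp only [prob, mul_sub, sum_sub_distrib, ← sum_mul]
  ring

lemma sum_mul_pderiv_ME (f : Finset (Elem n) → ℝ) (x : Elem n → ℝ) :
    ∑ i, x i * pderiv n (ME n B f) i x = ∑ e, dropLoss n B f e * jointProb n B x e := by
  have hblock : ∀ k : Fin K, ∑ m, x ⟨k, m⟩ * pderiv n (ME n B f) ⟨k, m⟩ x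
      = ∑ b, (ME n B f x - forcedME n B f x ⟨k, b⟩ none) := fun k => by
    simp_rw [pderiv_ME, mul_sum]
    calc _ = ∑ b : Fin (B k), ∑ m : Fin (n k), x ⟨k, m⟩ *
          (forcedME n B f x ⟨k, b⟩ (some m) - forcedME n B f x ⟨k, b⟩ none) := sum_comm
      _ = _ := sum_congr rfl fun b _ => sum_mul_forcedME_sub f x ⟨k, b⟩
  rw [Fintype.sum_sigma]
  simp_rw [hblock]
  rw [← Fintype.sum_sigma fun s : Slot B => ME n B f x - forcedME n B f x s none]
  simp_rw [ME_sub_forcedME_none, dropLoss, sum_mul]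
  exact sum_comm

lemma sum_indVec_mul_pderiv_ME (f : Finset (Elem n) → ℝ) (x : Elem n → ℝ)
    (S : Finset (Elem n)) :
    ∑ i, indVec n B S i * pderiv n (ME n B f) i x
      = ∑ e, (∑ i ∈ S, avgMarg n B f i e) * jointProb n B x e := by
  simp_rw [indVec, ite_mul, zero_mul, sum_ite_mem, univ_inter, sum_mul]
  rw [sum_comm]
  refine sum_congr rfl fun i _ => ?_
  simp_rw [pderiv_ME, forcedME_some_sub_none, avgMarg, mul_sum, sum_mul]
  rw [sum_comm]
  simp_rw [mul_assoc]

lemma inner_grad_ME (f : Finset (Elem n) → ℝ) (x : Elem n → ℝ) (S : Finset (Elem n)) :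
    inner' n (fun i => indVec n B S i - x i) (grad n (ME n B f) x)
      = ∑ e, (∑ i ∈ S, avgMarg n B f i e - dropLoss n B f e) * jointProb n B x e := by
  simp only [inner', grad, sub_mul, sum_sub_distrib, sum_indVec_mul_pderiv_ME,
    sum_mul_pderiv_ME]

lemma le_inner_grad_ME {f : Finset (Elem n) → ℝ} {x : Elem n → ℝ} (hx : InSimplex n x)
    {S : Finset (Elem n)} {c₁ c₂ : ℝ}
    (h : ∀ e, c₁ * f S - c₂ * f (chosen n B e univ)
      ≤ ∑ i ∈ S, avgMarg n B f i e - dropLoss n B f e) :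
    c₁ * f S - c₂ * ME n B f x
      ≤ inner' n (fun i => indVec n B S i - x i) (grad n (ME n B f) x) := by
  have hlhs : c₁ * f S - c₂ * ME n B f x
      = ∑ e, (c₁ * f S - c₂ * f (chosen n B e univ)) * jointProb n B x e := by
    simp only [sub_mul, sum_sub_distrib, mul_assoc, ← mul_sum, sum_jointProb, ME]
    ring
  rw [hlhs, inner_grad_ME]
  exact sum_le_sum fun e _ => mul_le_mul_of_nonneg_right (h e) (jointProb_nonneg hx e)

end Gradient

section SetFunction

variable {n : Fin K → ℕ} {f : Finset (Elem n) → ℝ}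

lemma marg_nonneg (hmono : MonotoneSet n f) (v : Elem n) (A : Finset (Elem n)) :
    0 ≤ marg n f v A :=
  sub_nonneg.2 (hmono _ _ (subset_insert v A))

lemma sum_insert_marg_le (hmono : MonotoneSet n f) (i : Elem n) (T A : Finset (Elem n)) :
    ∑ u ∈ insert i T, marg n f u A ≤ marg n f i A + ∑ u ∈ T, marg n f u A := by
  by_cases hi : i ∈ T
  · rw [insert_eq_of_mem hi]
    linarith [marg_nonneg hmono i A]
  · rw [sum_insert hi]

lemma eq_or_eq_insert_of_card_sdiff_le_one {α : Type*} [DecidableEq α] {Q R : Finset α}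
    (hQR : Q ⊆ R) (hcard : (R \ Q).card ≤ 1) : R = Q ∨ ∃ v ∉ Q, R = insert v Q := by
  rcases Nat.le_one_iff_eq_zero_or_eq_one.1 hcard with h | h
  · exact Or.inl (hQR.antisymm' (sdiff_eq_empty_iff_subset.1 (card_eq_zero.1 h)))
  · obtain ⟨v, hv⟩ := card_eq_one.1 h
    refine Or.inr ⟨v, fun hvQ => ?_, ?_⟩
    · simpa [hvQ] using hv.symm.subset (mem_singleton_self v)
    · rw [← sdiff_union_of_subset hQR, hv, insert_eq]

lemma sub_eq_sum_marg_erase {Q R : Finset (Elem n)} (hQR : Q ⊆ R) (hcard : (R \ Q).card ≤ 1) :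
    f R - f Q = ∑ v ∈ R \ Q, marg n f v (R.erase v) := by
  rcases eq_or_eq_insert_of_card_sdiff_le_one hQR hcard with rfl | ⟨v, hvQ, rfl⟩
  · simp
  · simp [insert_sdiff_of_notMem _ hvQ, erase_insert hvQ, marg]

lemma sub_eq_sum_marg {Q R : Finset (Elem n)} (hQR : Q ⊆ R) (hcard : (R \ Q).card ≤ 1) :
    f R - f Q = ∑ v ∈ R \ Q, marg n f v Q := by
  rcases eq_or_eq_insert_of_card_sdiff_le_one hQR hcard with rfl | ⟨v, hvQ, rfl⟩
  · simp
  · simp [insert_sdiff_of_notMem _ hvQ, marg]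

/-- Telescoping along `S \ C`: the step adding `i` starts from a superset of `C`, hence the
quantifier over `C'`. -/
lemma mul_union_sub_le_sum {α : ℝ} (t : Elem n → ℝ) {S C : Finset (Elem n)}
    (ht₀ : ∀ i ∈ S, 0 ≤ t i)
    (ht : ∀ i ∈ S, ∀ C', C ⊆ C' → i ∉ C' → α * marg n f i C' ≤ t i) :
    α * (f (S ∪ C) - f C) ≤ ∑ i ∈ S, t i := by
  induction S using Finset.induction_on generalizing C with
  | empty => simp
  | insert v S hvS ih =>
    rw [sum_insert hvS]
    by_cases hvC : v ∈ C
    · rw [insert_union, insert_eq_of_mem (mem_union_right S hvC)]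
      linarith [ih (fun i hi => ht₀ i (mem_insert_of_mem hi))
        (fun i hi => ht i (mem_insert_of_mem hi)), ht₀ v (mem_insert_self v S)]
    · have hstep := ht v (mem_insert_self v S) C subset_rfl hvC
      have hrest := ih (C := insert v C) (fun i hi => ht₀ i (mem_insert_of_mem hi))
        (fun i hi C' hC' => ht i (mem_insert_of_mem hi) C' ((subset_insert v C).trans hC'))
      rw [union_insert, ← insert_union] at hrest
      rw [marg] at hstep
      linarith

lemma WeaklyDR.mul_sum_marg_erase_le {α : ℝ} (hDR : WeaklyDR n f α) {A D : Finset (Elem n)}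
    (hAD : Disjoint A D) :
    α * ∑ v ∈ D, marg n f v ((A ∪ D).erase v) ≤ f (A ∪ D) - f A := by
  induction D using Finset.induction_on generalizing A with
  | empty => simp
  | insert w D hwD ih =>
    have hwA : w ∉ A := disjoint_right.1 hAD (mem_insert_self w D)
    have hrest := ih (A := insert w A) (disjoint_insert_left.2 ⟨hwD, hAD.mono_right
      (subset_insert w D)⟩)
    rw [insert_union, ← union_insert] at hrest
    have hstep : α * marg n f w ((A ∪ insert w D).erase w) ≤ f (insert w A) - f A :=
      hDR A _ (subset_erase.2 ⟨subset_union_left, hwA⟩) w (notMem_erase w _)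
    rw [sum_insert hwD, mul_add]
    linarith

lemma WeaklyBelow.mul_sub_le_sum_marg {γ : ℝ} (hmono : MonotoneSet n f) (hγ : 0 ≤ γ)
    (hWB : WeaklyBelow n f γ) (S R : Finset (Elem n)) :
    γ * (f S - f R) ≤ ∑ i ∈ S, marg n f i R := by
  have h := hWB R (S ∪ R) subset_union_right
  rw [union_sdiff_right] at h
  have hS : f S ≤ f (S ∪ R) := hmono _ _ subset_union_left
  have hsub : ∑ v ∈ S \ R, marg n f v R ≤ ∑ i ∈ S, marg n f i R :=
    sum_le_sum_of_subset_of_nonneg sdiff_subset fun v _ _ => marg_nonneg hmono v R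
  linarith [mul_le_mul_of_nonneg_left hS hγ]

lemma WeaklyBelow.mul_marg_sub_le {γ : ℝ} (hmono : MonotoneSet n f) (hWB : WeaklyBelow n f γ)
    {Q R : Finset (Elem n)} (hQR : Q ⊆ R) (hcard : (R \ Q).card ≤ 1) (i : Elem n) :
    γ * marg n f i R - (1 - γ) * (f R - f Q) ≤ marg n f i Q := by
  have hbelow := hWB Q (insert i R) (hQR.trans (subset_insert i R))
  have hsub : ∑ u ∈ insert i R \ Q, marg n f u Q ≤ marg n f i Q + (f R - f Q) := by
    rw [sub_eq_sum_marg hQR hcard]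
    refine le_trans (sum_le_sum_of_subset_of_nonneg ?_ fun u _ _ => marg_nonneg hmono u Q)
      (sum_insert_marg_le hmono i (R \ Q) Q)
    intro u
    simp only [mem_sdiff, mem_insert]
    tauto
  rw [show marg n f i R = f (insert i R) - f R from rfl]
  linarith

end SetFunction

section PointwiseBounds

variable {n B : Fin K → ℕ} {f : Finset (Elem n) → ℝ}

lemma Feasible.pos_of_mem {S : Finset (Elem n)} (hS : Feasible n B S) {i : Elem n}
    (hi : i ∈ S) : 0 < B i.1 :=
  (card_pos.2 ⟨i, mem_filter.2 ⟨hi, rfl⟩⟩ :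
    0 < (S.filter fun j => j.1 = i.1).card).trans_le (hS i.1)

lemma Feasible.sum_inv_mul_le {S : Finset (Elem n)} (hS : Feasible n B S) (X : Fin K → ℝ)
    (hX : ∀ k, 0 ≤ X k) : ∑ i ∈ S, (B i.1 : ℝ)⁻¹ * X i.1 ≤ ∑ k, X k := by
  rw [← sum_fiberwise S (fun i => i.1)]
  refine sum_le_sum fun k _ => ?_
  rw [sum_congr rfl fun i hi => by rw [(mem_filter.1 hi).2], sum_const, nsmul_eq_mul,
    ← mul_assoc, ← div_eq_mul_inv]
  exact mul_le_of_le_one_left (hX k) (div_le_one_of_le₀ (by exact_mod_cast hS k) (by positivity))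

lemma avgMarg_nonneg (hmono : MonotoneSet n f) (i : Elem n) (e : Choice n B) :
    0 ≤ avgMarg n B f i e :=
  mul_nonneg (by positivity) (sum_nonneg fun _ _ => marg_nonneg hmono _ _)

lemma dropLoss_eq_sum_sum (f : Finset (Elem n) → ℝ) (e : Choice n B) :
    dropLoss n B f e
      = ∑ k, ∑ b : Fin (B k), (f (chosen n B e univ) - f (chosenExcept n B e ⟨k, b⟩)) :=
  Fintype.sum_sigma _

lemma dropLoss_le_sum_marg_erase (hmono : MonotoneSet n f) (e : Choice n B) :
    dropLoss n B f e
      ≤ ∑ v ∈ chosen n B e univ, marg n f v ((chosen n B e univ).erase v) := by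
  set R := chosen n B e univ
  calc dropLoss n B f e
      = ∑ s, ∑ v ∈ R \ chosenExcept n B e s, marg n f v (R.erase v) :=
        sum_congr rfl fun s _ => sub_eq_sum_marg_erase (chosenExcept_subset e s)
          (card_sdiff_chosenExcept_le_one e s)
    _ = ∑ s, ∑ v ∈ R, if v ∉ chosenExcept n B e s then marg n f v (R.erase v) else 0 := by
        simp only [sdiff_eq_filter, sum_filter]
    _ = ∑ v ∈ R, ∑ s, if v ∉ chosenExcept n B e s then marg n f v (R.erase v) else 0 :=
        sum_comm
    _ = ∑ v ∈ R, (univ.filter fun s => v ∉ chosenExcept n B e s).card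
          * marg n f v (R.erase v) :=
        sum_congr rfl fun v _ => by rw [← sum_filter, sum_const, nsmul_eq_mul]
    _ ≤ ∑ v ∈ R, marg n f v (R.erase v) :=
        sum_le_sum fun v hv => mul_le_of_le_one_left (marg_nonneg hmono _ _)
          (by exact_mod_cast card_filter_notMem_chosenExcept_le_one hv)

lemma mul_marg_le_avgMarg {α : ℝ} (hDR : WeaklyDR n f α) {e : Choice n B} {i : Elem n}
    (hB : 0 < B i.1) {C : Finset (Elem n)} (hRC : chosen n B e univ ⊆ C) (hiC : i ∉ C) :
    α * marg n f i C ≤ avgMarg n B f i e := by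
  have hB' : (B i.1 : ℝ) ≠ 0 := by positivity
  calc α * marg n f i C = (B i.1 : ℝ)⁻¹ * ∑ _b : Fin (B i.1), α * marg n f i C := by
        rw [sum_const, card_univ, Fintype.card_fin, nsmul_eq_mul, inv_mul_cancel_left₀ hB']
    _ ≤ avgMarg n B f i e := by
        unfold avgMarg
        gcongr with b
        exact hDR _ C ((chosenExcept_subset e _).trans hRC) i hiC

lemma mul_marg_sub_le_avgMarg {γ : ℝ} (hmono : MonotoneSet n f) (hWB : WeaklyBelow n f γ)
    (e : Choice n B) {i : Elem n} (hB : 0 < B i.1) :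
    γ * marg n f i (chosen n B e univ) - (1 - γ) * ((B i.1 : ℝ)⁻¹ *
        ∑ b : Fin (B i.1), (f (chosen n B e univ) - f (chosenExcept n B e ⟨i.1, b⟩)))
      ≤ avgMarg n B f i e := by
  have hB' : (B i.1 : ℝ) ≠ 0 := by positivity
  calc _ = (B i.1 : ℝ)⁻¹ * ∑ b : Fin (B i.1), (γ * marg n f i (chosen n B e univ)
        - (1 - γ) * (f (chosen n B e univ) - f (chosenExcept n B e ⟨i.1, b⟩))) := by
        simp only [sum_sub_distrib, sum_const, card_univ, Fintype.card_fin, nsmul_eq_mul,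
          ← mul_sum]
        field_simp
    _ ≤ avgMarg n B f i e := by
        unfold avgMarg
        gcongr with b
        exact hWB.mul_marg_sub_le hmono (chosenExcept_subset e _)
          (card_sdiff_chosenExcept_le_one e _) i

variable {S : Finset (Elem n)}

lemma le_sum_avgMarg_sub_dropLoss_of_weaklyDR (hS : Feasible n B S) (hf₀ : 0 ≤ f ∅)
    (hmono : MonotoneSet n f) {α : ℝ} (hα : 0 < α) (hDR : WeaklyDR n f α) (e : Choice n B) :
    α * f S - (α + α⁻¹) * f (chosen n B e univ)
      ≤ ∑ i ∈ S, avgMarg n B f i e - dropLoss n B f e := by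
  set R := chosen n B e univ
  have hgain : α * (f (S ∪ R) - f R) ≤ ∑ i ∈ S, avgMarg n B f i e :=
    mul_union_sub_le_sum _ (fun i _ => avgMarg_nonneg hmono i e)
      fun i hi _ hRC hiC => mul_marg_le_avgMarg hDR (hS.pos_of_mem hi) hRC hiC
  have hloss : α * dropLoss n B f e ≤ f R := by
    have h := hDR.mul_sum_marg_erase_le (disjoint_empty_left R)
    rw [empty_union] at h
    linarith [mul_le_mul_of_nonneg_left (dropLoss_le_sum_marg_erase hmono e) hα.le]
  have hS_le : α * f S ≤ α * f (S ∪ R) :=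
    mul_le_mul_of_nonneg_left (hmono _ _ subset_union_left) hα.le
  have hloss' : dropLoss n B f e ≤ α⁻¹ * f R := (le_inv_mul_iff₀ hα).2 hloss
  linarith

lemma le_sum_avgMarg_sub_dropLoss_of_weaklyBelow_of_weaklyAbove (hS : Feasible n B S)
    (hf₀ : 0 ≤ f ∅) (hmono : MonotoneSet n f) {γ β : ℝ} (hγ₀ : 0 ≤ γ) (hγ₁ : γ ≤ 1)
    (hβ : 0 ≤ β) (hWB : WeaklyBelow n f γ) (hWA : WeaklyAbove n f β) (e : Choice n B) :
    γ ^ 2 * f S - (β + β * (1 - γ) + γ ^ 2) * f (chosen n B e univ)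
      ≤ ∑ i ∈ S, avgMarg n B f i e - dropLoss n B f e := by
  set R := chosen n B e univ
  set X : Fin K → ℝ := fun k => ∑ b : Fin (B k), (f R - f (chosenExcept n B e ⟨k, b⟩))
  have hgain : γ * ∑ i ∈ S, marg n f i R - (1 - γ) * ∑ i ∈ S, (B i.1 : ℝ)⁻¹ * X i.1
      ≤ ∑ i ∈ S, avgMarg n B f i e := by
    rw [mul_sum, mul_sum, ← sum_sub_distrib]
    exact sum_le_sum fun i hi => mul_marg_sub_le_avgMarg hmono hWB e (hS.pos_of_mem hi)
  have hbelow := mul_le_mul_of_nonneg_left (hWB.mul_sub_le_sum_marg hmono hγ₀ S R) hγ₀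
  have hfeas : ∑ i ∈ S, (B i.1 : ℝ)⁻¹ * X i.1 ≤ dropLoss n B f e :=
    (hS.sum_inv_mul_le X fun k => sum_nonneg fun b _ =>
      sub_nonneg.2 (hmono _ _ (chosenExcept_subset e _))).trans_eq (dropLoss_eq_sum_sum f e).symm
  have hloss : dropLoss n B f e ≤ β * f R := by
    have h := hWA ∅ R (empty_subset R)
    rw [sdiff_empty] at h
    linarith [dropLoss_le_sum_marg_erase hmono e, mul_nonneg hβ hf₀]
  linarith [mul_le_mul_of_nonneg_left hfeas (sub_nonneg.2 hγ₁),
    mul_le_mul_of_nonneg_left hloss (by linarith : (0 : ℝ) ≤ 2 - γ)]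

end PointwiseBounds

theorem multinoulliExtension_directional_gap_bound_general {K : ℕ} (n B : Fin K → ℕ)
    (f : Finset (Elem n) → ℝ) (hf0 : ∀ S, 0 ≤ f S)
    (hmono : MonotoneSet n f)
    (S : Finset (Elem n)) (hS : Feasible n B S)
    (x : Elem n → ℝ) (hx : InSimplex n x) :
    (∀ α : ℝ, 0 < α → α ≤ 1 → WeaklyDR n f α →
      α * f S - (α + α⁻¹) * ME n B f x ≤
        inner' n (fun i => indVec n B S i - x i) (grad n (ME n B f) x)) ∧
    (∀ γ β : ℝ, 0 < γ → γ ≤ 1 → 1 ≤ β → WeaklyBelow n f γ → WeaklyAbove n f β →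
      γ ^ 2 * f S - (β + β * (1 - γ) + γ ^ 2) * ME n B f x ≤
        inner' n (fun i => indVec n B S i - x i) (grad n (ME n B f) x)) :=
  ⟨fun _ hα _ hDR => le_inner_grad_ME hx
      (le_sum_avgMarg_sub_dropLoss_of_weaklyDR hS (hf0 ∅) hmono hα hDR),
    fun _ _ hγ₀ hγ₁ hβ hWB hWA => le_inner_grad_ME hx
      (le_sum_avgMarg_sub_dropLoss_of_weaklyBelow_of_weaklyAbove hS (hf0 ∅) hmono hγ₀.le hγ₁
        (zero_le_one.trans hβ) hWB hWA)⟩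

theorem multinoulliExtension_directional_gap_bound {K : ℕ} (n B : Fin K → ℕ) (hn : ∀ k, 1 ≤ n k)
    (hB : ∀ k, 0 < B k) (hBn : ∀ k, B k ≤ n k)
    (f : Finset (Elem n) → ℝ) (hf0 : ∀ S, 0 ≤ f S)
    (hmono : MonotoneSet n f)
    (S : Finset (Elem n)) (hS : Feasible n B S)
    (x : Elem n → ℝ) (hx : InSimplex n x) :
    (∀ α : ℝ, 0 < α → α ≤ 1 → WeaklyDR n f α →
      α * f S - (α + α⁻¹) * ME n B f x ≤
        inner' n (fun i => indVec n B S i - x i) (grad n (ME n B f) x)) ∧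
    (∀ γ β : ℝ, 0 < γ → γ ≤ 1 → 1 ≤ β → WeaklyBelow n f γ → WeaklyAbove n f β →
      γ ^ 2 * f S - (β + β * (1 - γ) + γ ^ 2) * ME n B f x ≤
        inner' n (fun i => indVec n B S i - x i) (grad n (ME n B f) x)) :=
  multinoulliExtension_directional_gap_bound_general n B f hf0 hmono S hS x hx

end Multinoulli
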